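/- arXiv:2007.01033 — 2 statements merged into one kernel-verified Lean document; each statement's English description precedes it below -/
import Mathlib

section
/- Let R : A ×> B and S : B ×> C be fuzzy relations, and let (f, h) be an (R;S)-nonexpansive pair, where f : A → [0,1] and h : C → [0,1]. Then there exists a function g : B → [0,1] such that (f, g) is R-nonexpansive and (g, h) is S-nonexpansive; in particular, g = R[f] is such a function. -/
open unitInterval

noncomputable section

instance : Fact ((0:ℝ) ≤ 1) := ⟨zero_le_one⟩

/-- A fuzzy relation between `A` and `B` is a map `A × B → [0,1]`. -/
abbrev FRel (A B : Type) : Type := A → B → I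

/-- Clamp a real number into the unit interval. -/
def clamp (x : ℝ) : I := Set.projIcc 0 1 zero_le_one x

/-- Composition of fuzzy relations: `(R;S)(a,c) = inf_b min(R(a,b) + S(b,c), 1)`. -/
def fcomp {A B C : Type} (R : FRel A B) (S : FRel B C) : FRel A C :=
  fun a c => ⨅ b : B, clamp ((R a b : ℝ) + (S b c : ℝ))

/-- Converse of a fuzzy relation. -/
def fconv {A B : Type} (R : FRel A B) : FRel B A := fun b a => R a b

open scoped Classical in
/-- The `ε`-graph of a function. -/
def fgraphE {A B : Type} (ε : I) (f : A → B) : FRel A B :=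
  fun a b => if f a = b then ε else 1

/-- The graph of a function. -/
def fgraph {A B : Type} (f : A → B) : FRel A B := fgraphE 0 f

/-- The `ε`-diagonal. -/
def fdiagE (ε : I) (A : Type) : FRel A A := fgraphE ε (id : A → A)

/-- The diagonal. -/
def fdiag (A : Type) : FRel A A := fgraph (id : A → A)

/-- A Set-functor. -/
structure SetFunctor where
  obj : Type → Type
  map : {A B : Type} → (A → B) → obj A → obj B
  map_id : ∀ (A : Type), map (id : A → A) = id
  map_comp : ∀ {A B C : Type} (f : A → B) (g : B → C), map (g ∘ f) = map g ∘ map f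

/-- A fuzzy lax extension of a Set-functor. -/
structure LaxExt (T : SetFunctor) where
  lift : {A B : Type} → FRel A B → FRel (T.obj A) (T.obj B)
  mono : ∀ {A B : Type} (R S : FRel A B), R ≤ S → lift R ≤ lift S
  lax_comp : ∀ {A B C : Type} (R : FRel A B) (S : FRel B C),
    lift (fcomp R S) ≤ fcomp (lift R) (lift S)
  lax_graph : ∀ {A B : Type} (f : A → B), lift (fgraph f) ≤ fgraph (T.map f)
  lax_graph_conv : ∀ {A B : Type} (f : A → B),
    lift (fconv (fgraph f)) ≤ fconv (fgraph (T.map f))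

end

/-- A pair `(f,g)` is `R`-nonexpansive if `f(a) − g(b) ≤ R(a,b)` for all `a, b`. -/
def RNonexp {A B : Type} (R : FRel A B) (f : A → I) (g : B → I) : Prop :=
  ∀ a b, (f a : ℝ) - (g b : ℝ) ≤ (R a b : ℝ)

/-- The nonexpansive companion `R[f](b) = sup_a max(f(a) − R(a,b), 0)`. -/
noncomputable def companion {A B : Type} (R : FRel A B) (f : A → I) : B → I :=
  fun b => ⨆ a : A, clamp ((f a : ℝ) - (R a b : ℝ))


lemma clamp_coe (x : ℝ) : (clamp x : ℝ) = max 0 (min 1 x) := rfl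

lemma le_clamp' {x : ℝ} (hx : x ≤ 1) : x ≤ (clamp x : ℝ) := by
  rw [clamp_coe, min_eq_right hx]; exact le_max_right _ _

lemma clamp_le' {x : ℝ} (hx : 0 ≤ x) : (clamp x : ℝ) ≤ x := by
  rw [clamp_coe]; exact max_le hx (min_le_right _ _)

lemma clamp_mono' {x y : ℝ} (hxy : x ≤ y) : clamp x ≤ clamp y := by
  rw [← Subtype.coe_le_coe, clamp_coe, clamp_coe]
  exact max_le_max le_rfl (min_le_min le_rfl hxy)

/-- an `(R;S)`-nonexpansive pair `(f,h)` can be interpolated by some `g`, in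
particular by the nonexpansive companion `R[f]`. -/
theorem nonexpansive_interpolation (A B C : Type) (R : FRel A B) (S : FRel B C)
    (f : A → I) (h : C → I) (hfh : RNonexp (fcomp R S) f h) :
    (∃ g : B → I, RNonexp R f g ∧ RNonexp S g h) ∧
    (RNonexp R f (companion R f) ∧ RNonexp S (companion R f) h) := by
  have hRfg : RNonexp R f (companion R f) := by
    intro a b
    have h1 : (f a : ℝ) - R a b ≤ 1 := by
      have := (f a).2.2; have := (R a b).2.1; linarith
    have h2 : clamp ((f a : ℝ) - R a b) ≤ companion R f b := by
      unfold companion; exact le_iSup (fun a => clamp ((f a : ℝ) - R a b)) a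
    have h3 := Subtype.coe_le_coe.2 h2
    have h4 := le_clamp' h1
    linarith
  have hSgh : RNonexp S (companion R f) h := by
    intro b c
    have key : ∀ a, (f a : ℝ) - R a b ≤ (S b c : ℝ) + h c := by
      intro a
      have h0 := hfh a c
      have h1 : (fcomp R S a c : I) ≤ clamp ((R a b : ℝ) + S b c) := iInf_le _ b
      have h2 : (clamp ((R a b : ℝ) + S b c) : ℝ) ≤ (R a b : ℝ) + S b c :=
        clamp_le' (add_nonneg (R a b).2.1 (S b c).2.1)
      have h3 := Subtype.coe_le_coe.2 h1
      linarith
    have hsup : companion R f b ≤ clamp ((S b c : ℝ) + h c) := by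
      unfold companion; exact iSup_le fun a => clamp_mono' (key a)
    have h2 : (clamp ((S b c : ℝ) + h c) : ℝ) ≤ (S b c : ℝ) + h c :=
      clamp_le' (add_nonneg (S b c).2.1 (h c).2.1)
    have h3 := Subtype.coe_le_coe.2 hsup
    linarith
  exact ⟨⟨companion R f, hRfg, hSgh⟩, hRfg, hSgh⟩
end

section
/- Let L be a fuzzy lax extension of a Set-functor T, and let σ : (−)^n ⇒ T be a natural transformation (i.e. σ_X : X^n → TX natural in X). Then for every fuzzy relation R : A ×> B and all tuples a ∈ A^n, b ∈ B^n with R(aᵢ, bᵢ) = 0 for all i, we have LR(σ_A(a), σ_B(b)) = 0. -/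
open unitInterval

lemma le_clamp {x : I} {t : ℝ} (ht : (x : ℝ) ≤ t) : x ≤ clamp t := by
  have : x = Set.projIcc 0 1 zero_le_one (x : ℝ) := by
    simp [Set.projIcc_of_mem zero_le_one x.2]
  rw [this, clamp]
  exact Set.monotone_projIcc zero_le_one ht

lemma clamp_zero : clamp 0 = 0 := by
  simp [clamp, Set.projIcc_of_mem zero_le_one (by norm_num : (0:ℝ) ∈ Set.Icc (0:ℝ) 1)]

lemma I_nonneg (x : I) : (0 : I) ≤ x := x.2.1

lemma I_le_one (x : I) : x ≤ (1 : I) := x.2.2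

/-- for a natural transformation `sig : (−)^n ⇒ T` and a fuzzy relation `R`, if
`R(aᵢ,bᵢ) = 0` for all `i`, then `LR(sig_A(a), sig_B(b)) = 0`. -/
theorem lax_extension_sigma_zero (T : SetFunctor) (L : LaxExt T) (n : ℕ)
    (sig : (X : Type) → (Fin n → X) → T.obj X)
    (hsig : ∀ (X Y : Type) (f : X → Y) (v : Fin n → X),
      T.map f (sig X v) = sig Y (fun i => f (v i)))
    (A B : Type) (R : FRel A B) (a : Fin n → A) (b : Fin n → B)
    (h : ∀ i, R (a i) (b i) = 0) :
    L.lift R (sig A a) (sig B b) = 0 := by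
  classical
  set S : FRel A B := fcomp (fconv (fgraph a)) (fgraph b) with hS
  have hRS : R ≤ S := by
    intro x y
    refine le_iInf fun i => ?_
    apply le_clamp
    by_cases hx : a i = x
    · by_cases hy : b i = y
      · have h0 : R x y = 0 := by rw [← hx, ← hy]; exact h i
        simp [fconv, fgraph, fgraphE, hx, hy, h0]
      · have : (R x y : ℝ) ≤ 1 := (R x y).2.2
        simp only [fconv, fgraph, fgraphE, hx, if_pos rfl, if_neg hy]
        simpa using this.trans (by norm_num)
    · have : (R x y : ℝ) ≤ 1 := (R x y).2.2
      simp only [fconv, fgraph, fgraphE, if_neg hx]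
      split_ifs <;> simp <;> linarith
  have h1 : L.lift R (sig A a) (sig B b) ≤ L.lift S (sig A a) (sig B b) :=
    L.mono R S hRS (sig A a) (sig B b)
  have h2 : L.lift S (sig A a) (sig B b) ≤
      fcomp (L.lift (fconv (fgraph a))) (L.lift (fgraph b)) (sig A a) (sig B b) :=
    L.lax_comp (fconv (fgraph a)) (fgraph b) (sig A a) (sig B b)
  set w : T.obj (Fin n) := sig (Fin n) id with hw
  have hwa : T.map a w = sig A a := by rw [hw, hsig]; rfl
  have hwb : T.map b w = sig B b := by rw [hw, hsig]; rfl
  have ha0 : L.lift (fconv (fgraph a)) (sig A a) w = 0 := by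
    have := L.lax_graph_conv a (sig A a) w
    have heq : fconv (fgraph (T.map a)) (sig A a) w = 0 := by
      simp [fconv, fgraph, fgraphE, hwa]
    exact le_antisymm (heq ▸ this) (I_nonneg _)
  have hb0 : L.lift (fgraph b) w (sig B b) = 0 := by
    have := L.lax_graph b w (sig B b)
    have heq : fgraph (T.map b) w (sig B b) = 0 := by
      simp [fgraph, fgraphE, hwb]
    exact le_antisymm (heq ▸ this) (I_nonneg _)
  have h3 : fcomp (L.lift (fconv (fgraph a))) (L.lift (fgraph b)) (sig A a) (sig B b) ≤ 0 := by
    have := iInf_le (fun c : T.obj (Fin n) =>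
      clamp ((L.lift (fconv (fgraph a)) (sig A a) c : ℝ) + (L.lift (fgraph b) c (sig B b) : ℝ))) w
    refine le_trans this ?_
    rw [ha0, hb0]
    simp [clamp_zero]
  exact le_antisymm ((h1.trans h2).trans h3) (I_nonneg _)
end
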